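/- Let (M^n, ω) be a compact balanced manifold whose first Chern-Einstein condition Ric^{ch}(ω) = λ·ω holds for a smooth function λ. Then λ is constant, and moreover either λ = 0 (ω is Chern-Ricci flat) or dω = 0 (ω is Kähler-Einstein). -/
import Mathlib


/-- On a compact balanced manifold `(M^n, ω)` with
`Ric^{ch}(ω) = λ·ω` (first Chern-Einstein), the function `λ` is constant, and either
`λ = 0` (Chern-Ricci flat) or `dω = 0` (Kähler-Einstein).  The contracted Bianchi
identity `∂̄*Ric^{ch} = i∂s^{ch} − (i/2)Λ²(Ric^{ch} ∧ ∂ω)`, the balanced vanishing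
`Λ²(ω ∧ ∂ω) = 0`, the identity `∂̄*(λω) = i∂λ`, and `d Ric^{ch}(ω) = 0` are hypotheses,
abstracted on spaces of `(1,0)`-forms `Λ10`, `(1,1)`-forms `Ω11` and `3`-forms `Ω3`. -/
theorem stmt5 {M : Type*} (n : ℕ) (hn : 2 ≤ n)
    (Λ10 Ω11 Ω3 : Type*)
    [AddCommGroup Λ10] [Module ℝ Λ10] [Module (M → ℝ) Λ10]
    [AddCommGroup Ω11] [Module ℝ Ω11] [Module (M → ℝ) Ω11]
    [AddCommGroup Ω3] [Module ℝ Ω3]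
    (ipartial : (M → ℝ) →ₗ[ℝ] Λ10)
    (hipker : ∀ f : M → ℝ, ipartial f = 0 → ∃ c : ℝ, f = fun _ => c)
    (dbarstar : Ω11 → Λ10)
    (wedgeΛ : Ω11 → Ω3 → Λ10)
    (hwedge_smul : ∀ (f : M → ℝ) (α : Ω11) (β : Ω3), wedgeΛ (f • α) β = f • wedgeΛ α β)
    (d11 : Ω11 →ₗ[ℝ] Ω3)
    (hconst : ∀ (c : ℝ) (α : Ω11), (fun _ : M => c) • α = c • α)
    (ω Ric : Ω11) (pω : Ω3)
    (lam s : M → ℝ) (hs : s = fun x => (n:ℝ) * lam x)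
    (hEin : Ric = lam • ω)
    (hRicClosed : d11 Ric = 0)
    (hbal : wedgeΛ ω pω = 0)
    (hBianchi : dbarstar Ric = ipartial s - wedgeΛ Ric pω)
    (hstar : dbarstar (lam • ω) = ipartial lam) :
    (∃ c : ℝ, lam = fun _ => c) ∧ ((∀ x, lam x = 0) ∨ d11 ω = 0) := by
  have hw : wedgeΛ Ric pω = 0 := by rw [hEin, hwedge_smul, hbal, smul_zero]
  have hsl : s = (n : ℝ) • lam := by funext x; simp [hs]
  have hkey : ipartial lam = (n : ℝ) • ipartial lam := by
    have h := hBianchi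
    rw [hw, sub_zero, hsl, map_smul] at h
    rw [← hEin] at hstar
    rw [hstar] at h
    exact h
  have hz : ipartial lam = 0 := by
    have h2 : ((n : ℝ) - 1) • ipartial lam = 0 := by
      rw [sub_smul, one_smul, ← hkey, sub_self]
    have hne : ((n : ℝ) - 1) ≠ 0 := by
      have : (2 : ℝ) ≤ (n : ℝ) := by exact_mod_cast hn
      linarith
    exact (smul_eq_zero.mp h2).resolve_left hne
  obtain ⟨c, hc⟩ := hipker lam hz
  refine ⟨⟨c, hc⟩, ?_⟩
  have hd : c • d11 ω = 0 := by
    rw [← map_smul, ← hconst, ← hc, ← hEin, hRicClosed]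
  rcases smul_eq_zero.mp hd with h | h
  · exact Or.inl fun x => by rw [hc]; exact h
  · exact Or.inr h
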